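/- Let g = [[a,b],[c,d]] ∈ Sp(n,1) and write g = κ₁(g) a_{A⁺(g)} κ₂(g) for the Cartan decomposition with κ₁(g), κ₂(g) ∈ K = Sp(n)×Sp(1). If κᵢ(g) has Sp(1)-component vᵢ, then v₁v₂ = d/|d|, i.e. τ_ν(κ₁(g)κ₂(g)) = τ_ν(d/|d|) for any representation τ_ν of Sp(1) extended trivially to K. -/

import Mathlib

open Matrix

noncomputable section

/-- The quadratic form matrix `J = diag(1,…,1,-1)` over the quaternions. -/
def Jm (n : ℕ) : Matrix (Fin (n+1)) (Fin (n+1)) (Quaternion ℝ) :=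
  Matrix.diagonal fun i => if i = Fin.last n then (-1 : Quaternion ℝ) else 1

/-- The group `Sp(n,1)` of quaternionic matrices preserving `Σ|u_j|² - |u_{n+1}|²`. -/
def SpGrp (n : ℕ) : Set (Matrix (Fin (n+1)) (Fin (n+1)) (Quaternion ℝ)) :=
  {g | gᴴ * Jm n * g = Jm n}

/-- The maximal compact subgroup `K = Sp(n) × Sp(1)`: block diagonal elements. -/
def inK (n : ℕ) (k : Matrix (Fin (n+1)) (Fin (n+1)) (Quaternion ℝ)) : Prop :=
  k ∈ SpGrp n ∧ ∀ i : Fin (n+1), i ≠ Fin.last n →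
    k i (Fin.last n) = 0 ∧ k (Fin.last n) i = 0

/-- The Cartan subgroup element `a_t = exp(tH)`. -/
def atm (n : ℕ) (t : ℝ) : Matrix (Fin (n+1)) (Fin (n+1)) (Quaternion ℝ) :=
  Matrix.of fun i j =>
    if (i = 0 ∧ j = 0) ∨ (i = Fin.last n ∧ j = Fin.last n) then
      algebraMap ℝ (Quaternion ℝ) (Real.cosh t)
    else if (i = 0 ∧ j = Fin.last n) ∨ (i = Fin.last n ∧ j = 0) then
      algebraMap ℝ (Quaternion ℝ) (Real.sinh t)
    else if i = j then 1 else 0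

/-- The null vector `v₊ = (e₁, 1)ᵗ`, fixed by the Iwasawa nilpotent group `N`. -/
def vplus (n : ℕ) : Fin (n+1) → Quaternion ℝ :=
  fun i => if i = 0 ∨ i = Fin.last n then 1 else 0

/-! Because `κ₁, κ₂` are block diagonal, the corner entry of `κ₁ a_t κ₂` is
`v₁ cosh t v₂ = cosh t · v₁ v₂`; the corner entries `vᵢ` of elements of `K` are unit quaternions
(read off from `κᴴ J κ = J` at the corner), so `|d| = cosh t` and `d / |d| = v₁ v₂`. -/

namespace Matrix

variable {l m n R : Type*} [Fintype m] [NonUnitalNonAssocSemiring R]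

theorem mul_apply_eq_of_col_eq_zero (A : Matrix l m R) (B : Matrix m n R) (i : l) (j : m)
    {k : n} (hB : ∀ j' ≠ j, B j' k = 0) : (A * B) i k = A i j * B j k := by
  rw [mul_apply, Finset.sum_eq_single_of_mem j (Finset.mem_univ _)
    fun j' _ hj' => by rw [hB j' hj', mul_zero]]

theorem mul_apply_eq_of_row_eq_zero (A : Matrix l m R) (B : Matrix m n R) {i : l} (j : m)
    (k : n) (hA : ∀ j' ≠ j, A i j' = 0) : (A * B) i k = A i j * B j k := by
  rw [mul_apply, Finset.sum_eq_single_of_mem j (Finset.mem_univ _)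
    fun j' _ hj' => by rw [hA j' hj', zero_mul]]

end Matrix

theorem norm_algebraMap_mul_div_norm {𝕜 : Type*} [NormedDivisionRing 𝕜] [NormedAlgebra ℝ 𝕜]
    {c : ℝ} (hc : 0 < c) {u : 𝕜} (hu : ‖u‖ = 1) :
    algebraMap ℝ 𝕜 c * u / algebraMap ℝ 𝕜 ‖algebraMap ℝ 𝕜 c * u‖ = u := by
  have hc' : algebraMap ℝ 𝕜 c ≠ 0 := (map_ne_zero _).2 hc.ne'
  rw [norm_mul, hu, mul_one, norm_algebraMap', Real.norm_of_nonneg hc.le, div_eq_mul_inv,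
    Algebra.commutes, mul_assoc, mul_inv_cancel₀ hc', mul_one]

theorem atm_apply_last_last (n : ℕ) (t : ℝ) :
    atm n t (Fin.last n) (Fin.last n) = algebraMap ℝ (Quaternion ℝ) (Real.cosh t) := by
  simp [atm]

theorem inK.mul_mul_apply_last_last {n : ℕ} {k₁ k₂ : Matrix (Fin (n+1)) (Fin (n+1)) (Quaternion ℝ)}
    (hk₁ : inK n k₁) (hk₂ : inK n k₂) (A : Matrix (Fin (n+1)) (Fin (n+1)) (Quaternion ℝ)) :
    (k₁ * A * k₂) (Fin.last n) (Fin.last n) =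
      k₁ (Fin.last n) (Fin.last n) * A (Fin.last n) (Fin.last n) * k₂ (Fin.last n) (Fin.last n) := by
  rw [mul_apply_eq_of_col_eq_zero _ _ _ (Fin.last n) fun j hj => (hk₂.2 j hj).1,
    mul_apply_eq_of_row_eq_zero _ _ (Fin.last n) _ fun j hj => (hk₁.2 j hj).2]

theorem inK.norm_apply_last_last {n : ℕ} {k : Matrix (Fin (n+1)) (Fin (n+1)) (Quaternion ℝ)}
    (hk : inK n k) : ‖k (Fin.last n) (Fin.last n)‖ = 1 := by
  set v := k (Fin.last n) (Fin.last n)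
  have hJ : ∀ j ≠ Fin.last n, Jm n j (Fin.last n) = 0 := fun j hj => diagonal_apply_ne _ hj
  have hkk : (kᴴ * Jm n * k) (Fin.last n) (Fin.last n) = star v * (-1) * v := by
    rw [mul_apply_eq_of_col_eq_zero _ _ _ (Fin.last n) fun j hj => (hk.2 j hj).1,
      mul_apply_eq_of_col_eq_zero _ _ _ (Fin.last n) hJ]
    simp [Jm, v]
  have hv : star v * v = 1 := by
    have h := congrFun (congrFun hk.1 (Fin.last n)) (Fin.last n)
    rw [hkk] at h
    simpa [Jm] using h
  have hsq : ‖v‖ * ‖v‖ = 1 := by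
    simpa [norm_mul, norm_star] using congrArg norm hv
  nlinarith [norm_nonneg v]

theorem stmt17_general (n : ℕ)
    (g : Matrix (Fin (n+1)) (Fin (n+1)) (Quaternion ℝ))
    (k₁ k₂ : Matrix (Fin (n+1)) (Fin (n+1)) (Quaternion ℝ)) (t : ℝ)
    (hk₁ : inK n k₁) (hk₂ : inK n k₂)
    (hdec : g = k₁ * atm n t * k₂) :
    k₁ (Fin.last n) (Fin.last n) * k₂ (Fin.last n) (Fin.last n) =
      g (Fin.last n) (Fin.last n) /
        algebraMap ℝ (Quaternion ℝ) ‖g (Fin.last n) (Fin.last n)‖ ∧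
    ∀ {M : Type} (τ : Quaternion ℝ → M),
      τ (k₁ (Fin.last n) (Fin.last n) * k₂ (Fin.last n) (Fin.last n)) =
        τ (g (Fin.last n) (Fin.last n) /
          algebraMap ℝ (Quaternion ℝ) ‖g (Fin.last n) (Fin.last n)‖) := by
  have hd : g (Fin.last n) (Fin.last n) = algebraMap ℝ (Quaternion ℝ) (Real.cosh t) *
      (k₁ (Fin.last n) (Fin.last n) * k₂ (Fin.last n) (Fin.last n)) := by
    rw [hdec, hk₁.mul_mul_apply_last_last hk₂, atm_apply_last_last, ← Algebra.commutes, mul_assoc]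
  have hv : ‖k₁ (Fin.last n) (Fin.last n) * k₂ (Fin.last n) (Fin.last n)‖ = 1 := by
    rw [norm_mul, hk₁.norm_apply_last_last, hk₂.norm_apply_last_last, one_mul]
  have key : k₁ (Fin.last n) (Fin.last n) * k₂ (Fin.last n) (Fin.last n) =
      g (Fin.last n) (Fin.last n) /
        algebraMap ℝ (Quaternion ℝ) ‖g (Fin.last n) (Fin.last n)‖ := by
    rw [hd, norm_algebraMap_mul_div_norm (Real.cosh_pos t) hv]
  exact ⟨key, fun τ => congrArg τ key⟩

/-- Let `g = [[a,b],[c,d]] ∈ Sp(n,1)` with Cartan decomposition `g = κ₁(g) a_t κ₂(g)`,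
`t ≥ 0`, `κ₁, κ₂ ∈ K = Sp(n) × Sp(1)` with `Sp(1)` components `v₁, v₂`. Then
`v₁ v₂ = d/|d|`, i.e. `τ_ν(κ₁(g)κ₂(g)) = τ_ν(d/|d|)` for every representation `τ_ν`
of `Sp(1)` extended trivially to `K`. -/
theorem stmt17 (n : ℕ) (hn : 1 ≤ n)
    (g : Matrix (Fin (n+1)) (Fin (n+1)) (Quaternion ℝ)) (hg : g ∈ SpGrp n)
    (k₁ k₂ : Matrix (Fin (n+1)) (Fin (n+1)) (Quaternion ℝ)) (t : ℝ)
    (hk₁ : inK n k₁) (hk₂ : inK n k₂) (ht : 0 ≤ t)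
    (hdec : g = k₁ * atm n t * k₂) :
    k₁ (Fin.last n) (Fin.last n) * k₂ (Fin.last n) (Fin.last n) =
      g (Fin.last n) (Fin.last n) /
        algebraMap ℝ (Quaternion ℝ) ‖g (Fin.last n) (Fin.last n)‖ ∧
    ∀ {M : Type} (τ : Quaternion ℝ → M),
      τ (k₁ (Fin.last n) (Fin.last n) * k₂ (Fin.last n) (Fin.last n)) =
        τ (g (Fin.last n) (Fin.last n) /
          algebraMap ℝ (Quaternion ℝ) ‖g (Fin.last n) (Fin.last n)‖) :=
  stmt17_general n g k₁ k₂ t hk₁ hk₂ hdec
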